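/- arXiv:2302.13849 — 6 statements merged into one kernel-verified Lean document; each statement's English description precedes it below -/
import Mathlib

section
/- If T is a quasi-balanced finite full binary tree (i.e., there exists a weight function under which all branches have equal total weight), then the weight function witnessing this is unique; explicitly, for a subtree with root edges e0,e1 leading to subtrees T0,T1, w(e0) = (1 + λ_{T1} − λ_{T0})/2 and w(e1) = (1 + λ_{T0} − λ_{T1})/2, where λ_S = E_S/2. -/
/-- Finite full rooted ordered binary trees with internal nodes labeled by `X`. -/
inductive BTree (X : Type) : Type
  | leaf : BTree X
  | node : X → BTree X → BTree X → BTree X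

namespace BTree

variable {X : Type}

/-- The branches (root-to-leaf paths) of a tree, each recorded as the list of
edge labels (`false` = left/0, `true` = right/1) along the path. -/
def branches : BTree X → List (List Bool)
  | leaf => [[]]
  | node _ l r => (branches l).map (List.cons false) ++ (branches r).map (List.cons true)

/-- The expected length of a uniformly random branch:
`E T = ∑_{b ∈ B(T)} |b| · 2^{-|b|}`. -/
noncomputable def E (t : BTree X) : ℝ :=
  ((branches t).map (fun b => (b.length : ℝ) * (2 : ℝ) ^ (-(b.length : ℤ)))).sum

/-- The internal-node positions of the tree, as paths from the root. -/
def nodePaths : BTree X → List (List Bool)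
  | leaf => []
  | node _ l r =>
      [] :: ((nodePaths l).map (List.cons false) ++ (nodePaths r).map (List.cons true))

/-- `w` is a weight function for `t`: at every internal node, the two outgoing
edges get nonnegative weights summing to `1`. -/
def IsWeightFn (t : BTree X) (w : List Bool → Bool → ℝ) : Prop :=
  ∀ p ∈ nodePaths t, 0 ≤ w p false ∧ 0 ≤ w p true ∧ w p false + w p true = 1

/-- The total weight of a branch `b`: the sum of the weights of its edges. -/
def branchWeight (w : List Bool → Bool → ℝ) (b : List Bool) : ℝ :=
  ((List.range b.length).map (fun i => w (b.take i) (b.getD i false))).sum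

/-- The subtree of `t` rooted at the end of the path `p` (junk value `leaf`
if the path leaves the tree). -/
def subtreeAt : BTree X → List Bool → BTree X
  | t, [] => t
  | leaf, _ :: _ => leaf
  | node _ l r, d :: p => subtreeAt (if d then r else l) p

/-- A tree is quasi-balanced if some weight function gives all branches the
same total weight `E T / 2`. -/
def QuasiBalanced (t : BTree X) : Prop :=
  ∃ w : List Bool → Bool → ℝ, IsWeightFn t w ∧ ∀ b ∈ branches t, branchWeight w b = E t / 2

/-- A tree is monotone if every subtree's expected branch length is at least
that of each of its immediate subtrees. -/
def IsMonotone : BTree X → Prop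
  | leaf => True
  | node x l r =>
      E l ≤ E (node x l r) ∧ E r ≤ E (node x l r) ∧ IsMonotone l ∧ IsMonotone r

/-- The minimum length of a branch of the tree. -/
def minBranch : BTree X → ℕ
  | leaf => 0
  | node _ l r => 1 + min (minBranch l) (minBranch r)

/-- The sequence of labeled examples along the path `p`: at a node labeled `x`,
following the edge labeled `d` produces the example `(x, d)`. -/
def examplesAlong : BTree X → List Bool → List (X × Bool)
  | leaf, _ => []
  | node _ _ _, [] => []
  | node x l r, d :: p => (x, d) :: examplesAlong (if d then r else l) p

end BTree

/-!
Averaging the branch weight over a uniformly random branch (branch `b` having probability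
`2^{-|b|}`) gives `E T / 2` for every weight function: at each internal node the two edge
weights sum to `1`, and a random branch takes each edge with probability one half. So if all
branches of a subtree have a common weight, that weight is half its expected branch length.
Applied to a subtree `node x T0 T1` and to its two children (whose branches lose exactly the
root edge weight), this yields `c = E/2`, `c - w(e0) = E T0 / 2`, `c - w(e1) = E T1 / 2`, and
`E = 1 + E T0 / 2 + E T1 / 2` solves for the two weights.
-/

namespace BTree

variable {X : Type}

noncomputable def expectation (t : BTree X) (f : List Bool → ℝ) : ℝ :=
  ((branches t).map (fun b => (2 : ℝ) ^ (-(b.length : ℤ)) * f b)).sum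

def EqualBranchWeights (t : BTree X) (w : List Bool → Bool → ℝ) : Prop :=
  ∃ c, ∀ b ∈ branches t, branchWeight w b = c

lemma two_zpow_neg_length_cons (d : Bool) (b : List Bool) :
    (2 : ℝ) ^ (-((d :: b).length : ℤ)) = 2⁻¹ * (2 : ℝ) ^ (-(b.length : ℤ)) := by
  rw [List.length_cons, Nat.cast_succ, neg_add, zpow_add₀ two_ne_zero, zpow_neg_one, mul_comm]

@[simp]
lemma expectation_leaf (f : List Bool → ℝ) : expectation (leaf : BTree X) f = f [] := by
  simp [expectation, branches]

lemma expectation_node (x : X) (l r : BTree X) (f : List Bool → ℝ) :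
    expectation (node x l r) f =
      (expectation l (fun b => f (false :: b)) + expectation r (fun b => f (true :: b))) / 2 := by
  simp only [expectation, branches, List.map_append, List.sum_append, List.map_map,
    Function.comp_def, two_zpow_neg_length_cons, mul_assoc, List.sum_map_mul_left]
  ring

lemma expectation_congr {t : BTree X} {f g : List Bool → ℝ} (h : ∀ b ∈ branches t, f b = g b) :
    expectation t f = expectation t g :=
  congrArg List.sum (List.map_congr_left fun b hb => by rw [h b hb])

lemma expectation_add (t : BTree X) (f g : List Bool → ℝ) :
    expectation t (fun b => f b + g b) = expectation t f + expectation t g := by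
  simp only [expectation, mul_add, List.sum_map_add]

@[simp]
lemma expectation_const (t : BTree X) (c : ℝ) : expectation t (fun _ => c) = c := by
  induction t with
  | leaf => exact expectation_leaf _
  | node x l r ihl ihr => rw [expectation_node, ihl, ihr]; ring

lemma E_eq_expectation (t : BTree X) : E t = expectation t (fun b => b.length) := by
  simp only [E, expectation, mul_comm]

lemma E_node (x : X) (l r : BTree X) : E (node x l r) = 1 + E l / 2 + E r / 2 := by
  simp only [E_eq_expectation, expectation_node, List.length_cons, Nat.cast_succ,
    expectation_add, expectation_const]
  ring

lemma branchWeight_cons (w : List Bool → Bool → ℝ) (d : Bool) (b : List Bool) :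
    branchWeight w (d :: b) = w [] d + branchWeight (fun q => w (d :: q)) b := by
  simp [branchWeight, List.range_succ_eq_map, List.map_map, Function.comp_def]

lemma cons_mem_branches_node {x : X} {l r : BTree X} {d : Bool} {b : List Bool}
    (hb : b ∈ branches (if d then r else l)) : d :: b ∈ branches (node x l r) := by
  cases d <;> simp_all [branches]

lemma cons_mem_nodePaths_node {x : X} {l r : BTree X} {d : Bool} {p : List Bool}
    (hp : p ∈ nodePaths (if d then r else l)) : d :: p ∈ nodePaths (node x l r) := by
  cases d <;> simp_all [nodePaths]

lemma IsWeightFn.child {x : X} {l r : BTree X} {w : List Bool → Bool → ℝ}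
    (hw : IsWeightFn (node x l r) w) (d : Bool) :
    IsWeightFn (if d then r else l) (fun q => w (d :: q)) :=
  fun _ hp => hw _ (cons_mem_nodePaths_node hp)

lemma IsWeightFn.subtreeAt {t : BTree X} {w : List Bool → Bool → ℝ} (hw : IsWeightFn t w)
    (p : List Bool) : IsWeightFn (t.subtreeAt p) (fun q => w (p ++ q)) := by
  induction t generalizing w p with
  | leaf => cases p <;> simp [IsWeightFn, BTree.subtreeAt, nodePaths]
  | node x l r ihl ihr =>
    cases p with
    | nil => exact hw
    | cons d p =>
      cases d with
      | false => exact ihl (hw.child false) p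
      | true => exact ihr (hw.child true) p

lemma IsWeightFn.expectation_branchWeight {t : BTree X} {w : List Bool → Bool → ℝ}
    (hw : IsWeightFn t w) : expectation t (branchWeight w) = E t / 2 := by
  induction t generalizing w with
  | leaf => simp [branchWeight, E, branches]
  | node x l r ihl ihr =>
    have hroot := (hw [] (by simp [nodePaths])).2.2
    simp only [expectation_node, branchWeight_cons, expectation_add, expectation_const,
      ihl (hw.child false), ihr (hw.child true), E_node]
    linarith

lemma IsWeightFn.eq_E_div_two {t : BTree X} {w : List Bool → Bool → ℝ} (hw : IsWeightFn t w)
    {c : ℝ} (hc : ∀ b ∈ branches t, branchWeight w b = c) : c = E t / 2 := by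
  rw [← hw.expectation_branchWeight, expectation_congr hc, expectation_const]

lemma branchWeight_child_eq {x : X} {l r : BTree X} {w : List Bool → Bool → ℝ} {c : ℝ}
    (hc : ∀ b ∈ branches (node x l r), branchWeight w b = c) (d : Bool) :
    ∀ b ∈ branches (if d then r else l), branchWeight (fun q => w (d :: q)) b = c - w [] d := by
  intro b hb
  have := hc _ (cons_mem_branches_node hb)
  rw [branchWeight_cons] at this
  linarith

lemma EqualBranchWeights.subtreeAt {t : BTree X} {w : List Bool → Bool → ℝ}
    (h : EqualBranchWeights t w) (p : List Bool) :
    EqualBranchWeights (t.subtreeAt p) (fun q => w (p ++ q)) := by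
  induction t generalizing w p with
  | leaf => cases p <;> exact ⟨0, by simp [BTree.subtreeAt, branches, branchWeight]⟩
  | node x l r ihl ihr =>
    obtain ⟨c, hc⟩ := h
    cases p with
    | nil => exact ⟨c, hc⟩
    | cons d p =>
      cases d with
      | false => exact ihl ⟨_, branchWeight_child_eq hc false⟩ p
      | true => exact ihr ⟨_, branchWeight_child_eq hc true⟩ p

lemma IsWeightFn.root_weights_of_equalBranchWeights {x : X} {l r : BTree X}
    {w : List Bool → Bool → ℝ} (hw : IsWeightFn (node x l r) w)
    (h : EqualBranchWeights (node x l r) w) :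
    w [] false = (1 + E r / 2 - E l / 2) / 2 ∧ w [] true = (1 + E l / 2 - E r / 2) / 2 := by
  obtain ⟨c, hc⟩ := h
  have hT := hw.eq_E_div_two hc
  have hl := (hw.child false).eq_E_div_two (branchWeight_child_eq hc false)
  have hr := (hw.child true).eq_E_div_two (branchWeight_child_eq hc true)
  simp only [Bool.false_eq_true, if_false, if_true] at hl hr
  rw [E_node] at hT
  constructor <;> linarith

end BTree

/-- If `T` is quasi-balanced as witnessed by the weight function `w` (all
branches have weight `E T / 2`), then `w` is uniquely determined: at every
internal node with subtrees `T0, T1`, we have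
`w(e0) = (1 + λ_{T1} - λ_{T0})/2` and `w(e1) = (1 + λ_{T0} - λ_{T1})/2`,
where `λ_S = E S / 2`. -/
theorem quasiBalanced_weight_unique {X : Type} (T : BTree X)
    (w : List Bool → Bool → ℝ) (hw : BTree.IsWeightFn T w)
    (hbal : ∀ b ∈ BTree.branches T, BTree.branchWeight w b = BTree.E T / 2) :
    ∀ p ∈ BTree.nodePaths T, ∀ (x : X) (T0 T1 : BTree X),
      BTree.subtreeAt T p = BTree.node x T0 T1 →
        w p false = (1 + BTree.E T1 / 2 - BTree.E T0 / 2) / 2 ∧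
        w p true = (1 + BTree.E T0 / 2 - BTree.E T1 / 2) / 2 := by
  intro p _ x T0 T1 hsub
  have hwp := hw.subtreeAt p
  have hbp := BTree.EqualBranchWeights.subtreeAt ⟨_, hbal⟩ p
  rw [hsub] at hwp hbp
  simpa using hwp.root_weights_of_equalBranchWeights hbp
end

section
/- If T is a quasi-balanced (equivalently, monotone) finite full binary tree and X is the length of a random branch, then for every ε > 0, Pr[X < (1−ε)E_T] ≤ exp(−ε²E_T/4) and Pr[X > (1+ε)E_T] ≤ exp(−ε²E_T/(4(1+ε))). -/
namespace BTreeProof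

open Real BTree

variable {X : Type}

noncomputable def M (t : BTree X) (lam : ℝ) : ℝ :=
  ((branches t).map (fun b => (2:ℝ) ^ (-(b.length:ℤ)) * lam ^ b.length)).sum

lemma shift_sum (d : Bool) (L : List (List Bool)) (f : ℕ → ℝ) :
    ((L.map (List.cons d)).map (fun b => f b.length)).sum
      = (L.map (fun b => f (b.length + 1))).sum := by
  rw [List.map_map]; congr 1

lemma two_zpow_succ (n : ℕ) :
    (2:ℝ) ^ (-((n + 1 : ℕ):ℤ)) = (1/2) * ((2:ℝ) ^ (-(n:ℤ))) := by
  have : -((n + 1 : ℕ):ℤ) = (-(n:ℤ)) + (-1) := by push_cast; ring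
  rw [this, zpow_add₀ (two_ne_zero)]
  norm_num
  ring

lemma P_eq_one : ∀ t : BTree X,
    ((branches t).map (fun b => (2:ℝ) ^ (-(b.length:ℤ)))).sum = 1
  | .leaf => by simp [branches]
  | .node x l r => by
    have hl := P_eq_one l
    have hr := P_eq_one r
    rw [branches, List.map_append, List.sum_append,
      shift_sum false _ (fun n => (2:ℝ) ^ (-(n:ℤ))),
      shift_sum true _ (fun n => (2:ℝ) ^ (-(n:ℤ)))]
    have hcongr : ∀ L : List (List Bool),
        (L.map (fun b => (2:ℝ) ^ (-((b.length + 1 : ℕ):ℤ)))).sum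
          = (1/2) * (L.map (fun b => (2:ℝ) ^ (-(b.length:ℤ)))).sum := by
      intro L
      rw [List.map_congr_left (fun b _ => two_zpow_succ b.length), List.sum_map_mul_left]
    rw [hcongr, hcongr, hl, hr]
    norm_num

lemma E_node (x : X) (l r : BTree X) :
    E (node x l r) = 1 + (E l + E r) / 2 := by
  unfold E
  rw [branches, List.map_append, List.sum_append,
    shift_sum false _ (fun n => (n:ℝ) * (2:ℝ) ^ (-(n:ℤ))),
    shift_sum true _ (fun n => (n:ℝ) * (2:ℝ) ^ (-(n:ℤ)))]
  have key : ∀ b : List Bool,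
      ((b.length + 1 : ℕ):ℝ) * (2:ℝ) ^ (-((b.length + 1 : ℕ):ℤ))
        = (1/2) * ((b.length:ℝ) * (2:ℝ) ^ (-(b.length:ℤ)))
          + (1/2) * ((2:ℝ) ^ (-(b.length:ℤ))) := by
    intro b
    rw [two_zpow_succ]
    push_cast
    ring
  rw [List.map_congr_left (fun b _ => key b), List.map_congr_left (fun b _ => key b)]
  rw [List.sum_map_add, List.sum_map_add]
  rw [List.sum_map_mul_left, List.sum_map_mul_left, List.sum_map_mul_left,
    List.sum_map_mul_left]
  rw [P_eq_one l, P_eq_one r]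
  ring

lemma M_node (x : X) (l r : BTree X) (lam : ℝ) :
    M (node x l r) lam = lam / 2 * (M l lam + M r lam) := by
  unfold M
  rw [branches, List.map_append, List.sum_append,
    shift_sum false _ (fun n => (2:ℝ) ^ (-(n:ℤ)) * lam ^ n),
    shift_sum true _ (fun n => (2:ℝ) ^ (-(n:ℤ)) * lam ^ n)]
  have key : ∀ b : List Bool,
      (2:ℝ) ^ (-((b.length + 1 : ℕ):ℤ)) * lam ^ (b.length + 1)
        = (lam / 2) * ((2:ℝ) ^ (-(b.length:ℤ)) * lam ^ b.length) := by
    intro b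
    rw [two_zpow_succ, pow_succ]
    ring
  rw [List.map_congr_left (fun b _ => key b), List.map_congr_left (fun b _ => key b),
    List.sum_map_mul_left, List.sum_map_mul_left]
  ring

lemma E_nonneg (t : BTree X) : 0 ≤ E t := by
  apply List.sum_nonneg
  intro y hy
  simp only [List.mem_map] at hy
  obtain ⟨b, _, rfl⟩ := hy
  positivity

lemma key_step (lam B a b : ℝ) (hB : 0 < B) (hlam0 : 0 < lam)
    (hlam : lam * (B + 1) = 2 * B)
    (hab : a - b ≤ 2) (hba : b - a ≤ 2) :
    lam / 2 * (B ^ (a/2) + B ^ (b/2)) ≤ B ^ ((1 + (a+b)/2)/2) := by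
  set c := Real.log B with hc
  have hBx : ∀ x : ℝ, B ^ x = Real.exp (c * x) := fun x => Real.rpow_def_of_pos hB x
  set s : ℝ := Real.exp (c * (1/2)) with hs
  have hspos : 0 < s := Real.exp_pos _
  have hs2 : s * s = B := by
    rw [hs, ← Real.exp_add]
    have : c * (1/2) + c * (1/2) = c := by ring
    rw [this, hc, Real.exp_log hB]
  have hcosh : Real.cosh (c * ((a-b)/4)) ≤ Real.cosh (c * (1/2)) := by
    rw [Real.cosh_le_cosh, abs_mul, abs_mul]
    apply mul_le_mul_of_nonneg_left _ (abs_nonneg c)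
    rw [abs_of_nonneg (by norm_num : (0:ℝ) ≤ (1:ℝ)/2), abs_le]
    constructor <;> nlinarith
  have h1 : B ^ (a/2) = Real.exp (c * ((a+b)/4)) * Real.exp (c * ((a-b)/4)) := by
    rw [hBx, ← Real.exp_add]; congr 1; ring
  have h2 : B ^ (b/2) = Real.exp (c * ((a+b)/4)) * Real.exp (-(c * ((a-b)/4))) := by
    rw [hBx, ← Real.exp_add]; congr 1; ring
  have hsum : B ^ (a/2) + B ^ (b/2)
      = Real.exp (c * ((a+b)/4)) * (2 * Real.cosh (c * ((a-b)/4))) := by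
    rw [h1, h2, Real.cosh_eq]; ring
  have hrhs : B ^ ((1 + (a+b)/2)/2) = Real.exp (c * ((a+b)/4)) * s := by
    rw [hBx, hs, ← Real.exp_add]; congr 1; ring
  have hcosh2 : 2 * Real.cosh (c * (1/2)) = s + 1/s := by
    rw [Real.cosh_eq, hs, Real.exp_neg]
    field_simp
  have hfinal : lam / 2 * (s + 1/s) = s := by
    have h : lam * (s * s + 1) = 2 * (s * s) := by rw [hs2]; exact hlam
    field_simp
    nlinarith [h]
  calc lam / 2 * (B ^ (a/2) + B ^ (b/2))
      = lam / 2 * (Real.exp (c * ((a+b)/4)) * (2 * Real.cosh (c * ((a-b)/4)))) := by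
        rw [hsum]
    _ ≤ lam / 2 * (Real.exp (c * ((a+b)/4)) * (2 * Real.cosh (c * (1/2)))) := by
        apply mul_le_mul_of_nonneg_left _ (by positivity)
        apply mul_le_mul_of_nonneg_left _ (Real.exp_pos _).le
        linarith
    _ = Real.exp (c * ((a+b)/4)) * (lam / 2 * (s + 1/s)) := by rw [hcosh2]; ring
    _ = Real.exp (c * ((a+b)/4)) * s := by rw [hfinal]
    _ = B ^ ((1 + (a+b)/2)/2) := hrhs.symm

lemma mgf_le (lam : ℝ) (h0 : 0 < lam) (h2 : lam < 2) :
    ∀ t : BTree X, IsMonotone t → M t lam ≤ (lam / (2 - lam)) ^ (E t / 2)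
  | .leaf, _ => by
    simp [M, branches, E]
  | .node x l r, hmono => by
    obtain ⟨hl, hr, hml, hmr⟩ := hmono
    have ihl := mgf_le lam h0 h2 l hml
    have ihr := mgf_le lam h0 h2 r hmr
    have hE := E_node x l r
    have h2l : (0:ℝ) < 2 - lam := by linarith
    have hB : 0 < lam / (2 - lam) := div_pos h0 h2l
    have hlameq : lam * (lam / (2 - lam) + 1) = 2 * (lam / (2 - lam)) := by
      field_simp
      ring
    have hab : E l - E r ≤ 2 := by rw [hE] at hl; linarith
    have hba : E r - E l ≤ 2 := by rw [hE] at hr; linarith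
    rw [M_node, hE]
    calc lam / 2 * (M l lam + M r lam)
        ≤ lam / 2 * ((lam / (2 - lam)) ^ (E l / 2) + (lam / (2 - lam)) ^ (E r / 2)) := by
          apply mul_le_mul_of_nonneg_left (add_le_add ihl ihr) (by positivity)
      _ ≤ (lam / (2 - lam)) ^ ((1 + (E l + E r) / 2) / 2) :=
          key_step lam _ (E l) (E r) hB h0 hlameq hab hba

/-- generic Chernoff transfer for the lower tail -/
lemma tail_lower (t : BTree X) (lam : ℝ) (h0 : 0 < lam) (h1 : lam ≤ 1) (c : ℝ) :
    ((branches t).map (fun b =>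
        if (b.length : ℝ) < c then (2 : ℝ) ^ (-(b.length : ℤ)) else 0)).sum
      ≤ lam ^ (-c) * M t lam := by
  unfold M
  rw [← List.sum_map_mul_left]
  apply List.sum_le_sum
  intro b _
  by_cases h : (b.length : ℝ) < c
  · rw [if_pos h]
    have hp : (0:ℝ) < (2:ℝ) ^ (-(b.length:ℤ)) := by positivity
    have hone : (1:ℝ) ≤ lam ^ (-c) * lam ^ (b.length:ℕ) := by
      rw [← Real.rpow_natCast lam b.length, ← Real.rpow_add h0]
      exact Real.one_le_rpow_of_pos_of_le_one_of_nonpos h0 h1 (by linarith)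
    nlinarith [Real.rpow_nonneg h0.le (-c), pow_nonneg h0.le b.length]
  · rw [if_neg h]
    have : (0:ℝ) ≤ lam ^ (-c) := Real.rpow_nonneg h0.le _
    positivity

/-- generic Chernoff transfer for the upper tail -/
lemma tail_upper (t : BTree X) (lam : ℝ) (h1 : 1 ≤ lam) (c : ℝ) :
    ((branches t).map (fun b =>
        if c < (b.length : ℝ) then (2 : ℝ) ^ (-(b.length : ℤ)) else 0)).sum
      ≤ lam ^ (-c) * M t lam := by
  have h0 : (0:ℝ) < lam := lt_of_lt_of_le one_pos h1
  unfold M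
  rw [← List.sum_map_mul_left]
  apply List.sum_le_sum
  intro b _
  by_cases h : c < (b.length : ℝ)
  · rw [if_pos h]
    have hp : (0:ℝ) < (2:ℝ) ^ (-(b.length:ℤ)) := by positivity
    have hone : (1:ℝ) ≤ lam ^ (-c) * lam ^ (b.length:ℕ) := by
      rw [← Real.rpow_natCast lam b.length, ← Real.rpow_add h0]
      calc (1:ℝ) = lam ^ (0:ℝ) := (Real.rpow_zero lam).symm
        _ ≤ lam ^ (-c + (b.length:ℝ)) :=
            Real.rpow_le_rpow_of_exponent_le h1 (by linarith)
    nlinarith [Real.rpow_nonneg h0.le (-c), pow_nonneg h0.le b.length]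
  · rw [if_neg h]
    have : (0:ℝ) ≤ lam ^ (-c) := Real.rpow_nonneg h0.le _
    positivity

lemma log_bound_lower {ε : ℝ} (hε : 0 < ε) :
    ε - 1.5 * ε ^ 2 ≤ Real.log (2 - Real.exp (-ε)) := by
  have hlt1 : Real.exp (-ε) < 1 := Real.exp_lt_one_iff.mpr (by linarith)
  have hpos : 0 < 2 - Real.exp (-ε) := by linarith
  rw [Real.le_log_iff_exp_le hpos]
  by_cases hx : ε - 1.5 * ε ^ 2 ≤ 0
  · have := Real.exp_le_one_iff.mpr hx
    linarith
  · push_neg at hx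
    have hε23 : ε < 2/3 := by nlinarith
    have hεle1 : ε ≤ 1 := by linarith
    -- exp (-ε) ≤ 1 - ε + ε^2/2 + (2/9) ε^3
    have hb := Real.exp_bound (x := -ε) (by rw [abs_neg, abs_of_pos hε]; exact hεle1)
      (n := 3) (by norm_num)
    have hsum3 : (∑ m ∈ Finset.range 3, (-ε) ^ m / m.factorial)
        = 1 - ε + ε^2/2 := by
      rw [Finset.sum_range_succ, Finset.sum_range_succ, Finset.sum_range_succ,
        Finset.sum_range_zero]
      norm_num [Nat.factorial]
      ring
    rw [hsum3] at hb
    rw [abs_neg, abs_of_pos hε] at hb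
    norm_num [Nat.factorial] at hb
    have hexpneg : Real.exp (-ε) ≤ 1 - ε + ε^2/2 + (2/9) * ε^3 := by
      have := (abs_sub_le_iff.mp hb).1
      linarith
    -- exp (ε - 1.5 ε²) ≤ 1 / (1 - (ε - 1.5 ε²))
    have hxlt1 : ε - 1.5 * ε ^ 2 < 1 := by nlinarith
    have hexp2 : Real.exp (ε - 1.5 * ε ^ 2) ≤ 1 / (1 - (ε - 1.5 * ε ^ 2)) :=
      Real.exp_bound_div_one_sub_of_interval hx.le hxlt1
    have hden : 0 < 1 - (ε - 1.5 * ε ^ 2) := by linarith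
    have hfin : 1 / (1 - (ε - 1.5 * ε ^ 2)) ≤ 2 - Real.exp (-ε) := by
      rw [div_le_iff₀ hden]
      have h2e : 2 - Real.exp (-ε) ≥ 1 + ε - ε^2/2 - (2/9) * ε^3 := by linarith
      nlinarith [pow_nonneg hε.le 3, pow_nonneg hε.le 4, pow_nonneg hε.le 5,
        mul_nonneg (pow_nonneg hε.le 3) (sub_nonneg.mpr hεle1)]
    linarith

lemma exp_half_lt_two : Real.exp (1/2 : ℝ) < 2 := by
  nlinarith [Real.exp_one_lt_d9, Real.exp_pos (1/2 : ℝ),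
    Real.exp_add (1/2 : ℝ) (1/2 : ℝ), Real.exp_pos (1:ℝ)]


lemma log_bound_upper {ε : ℝ} (hε : 0 < ε) :
    -ε/2 ≤ Real.log (2 - Real.exp (ε / (2*(1+ε)))) := by
  have h1ε : (0:ℝ) < 1 + ε := by linarith
  set t : ℝ := ε / (2*(1+ε)) with htdef
  have ht0 : 0 < t := by positivity
  have ht2 : t < 1/2 := by
    rw [htdef, div_lt_iff₀ (by positivity)]
    linarith
  have hexp_t : Real.exp t ≤ 1/(1-t) :=
    Real.exp_bound_div_one_sub_of_interval ht0.le (by linarith)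
  have hkey : Real.exp (-ε/2) ≤ 2 - Real.exp t := by
    have hstep1 : Real.exp (-ε/2) ≤ 1/(1+ε/2) := by
      have hee : (1+ε/2) ≤ Real.exp (ε/2) := by linarith [Real.add_one_le_exp (ε/2)]
      have hpos2 : (0:ℝ) < 1 + ε/2 := by linarith
      rw [show (-ε/2 : ℝ) = -(ε/2) by ring, Real.exp_neg, one_div]
      gcongr
    have h2ε : (0:ℝ) < 2 + ε := by linarith
    have hstep2 : (2:ℝ) - 1/(1-t) = 1/(1+ε/2) := by
      have h1t : (1:ℝ) - t = (2+ε)/(2*(1+ε)) := by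
        rw [htdef]
        field_simp
        ring
      rw [h1t, one_div_div]
      have hne1 : (2:ℝ) + ε ≠ 0 := ne_of_gt h2ε
      have hne2 : (1:ℝ) + ε/2 ≠ 0 := ne_of_gt (by linarith)
      field_simp
      ring
    linarith
  calc -ε/2 = Real.log (Real.exp (-ε/2)) := (Real.log_exp _).symm
    _ ≤ Real.log (2 - Real.exp t) := Real.log_le_log (Real.exp_pos _) hkey


end BTreeProof

open Classical in
/-- Concentration of the random branch length of a quasi-balanced (monotone)
tree: for every `ε > 0`,
`Pr[X < (1-ε) E_T] ≤ exp(-ε² E_T / 4)` and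
`Pr[X > (1+ε) E_T] ≤ exp(-ε² E_T / (4(1+ε)))`. -/
theorem monotone_branch_length_concentration {X : Type} (T : BTree X)
    (hmono : BTree.IsMonotone T) (ε : ℝ) (hε : 0 < ε) :
    ((BTree.branches T).map (fun b =>
        if (b.length : ℝ) < (1 - ε) * BTree.E T then (2 : ℝ) ^ (-(b.length : ℤ)) else 0)).sum
      ≤ Real.exp (-(ε ^ 2 * BTree.E T) / 4) ∧
    ((BTree.branches T).map (fun b =>
        if (1 + ε) * BTree.E T < (b.length : ℝ) then (2 : ℝ) ^ (-(b.length : ℤ)) else 0)).sum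
      ≤ Real.exp (-(ε ^ 2 * BTree.E T) / (4 * (1 + ε))) := by

  have hE0 : 0 ≤ BTree.E T := BTreeProof.E_nonneg T
  constructor
  · -- lower tail
    have h0 : (0:ℝ) < Real.exp (-ε) := Real.exp_pos _
    have h1 : Real.exp (-ε) ≤ 1 := (Real.exp_le_one_iff).mpr (by linarith)
    have h2 : Real.exp (-ε) < 2 := lt_of_le_of_lt h1 one_lt_two
    have h2m : (0:ℝ) < 2 - Real.exp (-ε) := by linarith
    have hBpos : (0:ℝ) < Real.exp (-ε) / (2 - Real.exp (-ε)) := div_pos h0 h2m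
    have hM := BTreeProof.mgf_le (Real.exp (-ε)) h0 h2 T hmono
    have htail := BTreeProof.tail_lower T (Real.exp (-ε)) h0 h1 ((1-ε) * BTree.E T)
    have hL := BTreeProof.log_bound_lower hε
    calc ((BTree.branches T).map (fun b =>
          if (b.length : ℝ) < (1 - ε) * BTree.E T then (2 : ℝ) ^ (-(b.length : ℤ)) else 0)).sum
        ≤ Real.exp (-ε) ^ (-((1-ε) * BTree.E T)) * BTreeProof.M T (Real.exp (-ε)) := htail
      _ ≤ Real.exp (-ε) ^ (-((1-ε) * BTree.E T))
            * (Real.exp (-ε) / (2 - Real.exp (-ε))) ^ (BTree.E T / 2) :=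
          mul_le_mul_of_nonneg_left hM (Real.rpow_nonneg h0.le _)
      _ = Real.exp (ε * ((1-ε) * BTree.E T)
            + (-ε - Real.log (2 - Real.exp (-ε))) * (BTree.E T / 2)) := by
          rw [Real.exp_add]
          congr 1
          · rw [Real.rpow_def_of_pos h0, Real.log_exp]
            congr 1
            ring
          · rw [Real.rpow_def_of_pos hBpos,
              Real.log_div (ne_of_gt h0) (ne_of_gt h2m), Real.log_exp]
      _ ≤ Real.exp (-(ε ^ 2 * BTree.E T) / 4) := by
          apply Real.exp_le_exp.mpr
          rw [le_div_iff₀ (by norm_num : (0:ℝ) < 4)]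
          have pu : (ε * (1-ε) + (-ε - Real.log (2 - Real.exp (-ε))) / 2) * 4 ≤ -ε^2 := by
            nlinarith [hL]
          nlinarith [mul_le_mul_of_nonneg_left pu hE0]
  · -- upper tail
    have h1ε : (0:ℝ) < 1 + ε := by linarith
    set t : ℝ := ε / (2*(1+ε)) with htdef
    have ht0 : 0 < t := by positivity
    have ht2 : t < 1/2 := by
      rw [htdef, div_lt_iff₀ (by positivity)]
      linarith
    have ht' : t * (2*(1+ε)) = ε := by
      rw [htdef]
      field_simp
    have hlam1 : (1:ℝ) ≤ Real.exp t := Real.one_le_exp ht0.le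
    have h0 : (0:ℝ) < Real.exp t := Real.exp_pos _
    have h2 : Real.exp t < 2 := lt_trans (Real.exp_lt_exp.mpr ht2) BTreeProof.exp_half_lt_two
    have h2m : (0:ℝ) < 2 - Real.exp t := by linarith
    have hBpos : (0:ℝ) < Real.exp t / (2 - Real.exp t) := div_pos h0 h2m
    have hM := BTreeProof.mgf_le (Real.exp t) h0 h2 T hmono
    have htail := BTreeProof.tail_upper T (Real.exp t) hlam1 ((1+ε) * BTree.E T)
    have hL' : -ε/2 ≤ Real.log (2 - Real.exp t) := BTreeProof.log_bound_upper hε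
    calc ((BTree.branches T).map (fun b =>
          if (1 + ε) * BTree.E T < (b.length : ℝ) then (2 : ℝ) ^ (-(b.length : ℤ)) else 0)).sum
        ≤ Real.exp t ^ (-((1+ε) * BTree.E T)) * BTreeProof.M T (Real.exp t) := htail
      _ ≤ Real.exp t ^ (-((1+ε) * BTree.E T))
            * (Real.exp t / (2 - Real.exp t)) ^ (BTree.E T / 2) :=
          mul_le_mul_of_nonneg_left hM (Real.rpow_nonneg h0.le _)
      _ = Real.exp (-(t * ((1+ε) * BTree.E T))
            + (t - Real.log (2 - Real.exp t)) * (BTree.E T / 2)) := by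
          rw [Real.exp_add]
          congr 1
          · rw [Real.rpow_def_of_pos h0, Real.log_exp]
            congr 1
            ring
          · rw [Real.rpow_def_of_pos hBpos,
              Real.log_div (ne_of_gt h0) (ne_of_gt h2m), Real.log_exp]
      _ ≤ Real.exp (-(ε ^ 2 * BTree.E T) / (4 * (1 + ε))) := by
          apply Real.exp_le_exp.mpr
          rw [le_div_iff₀ (by positivity)]
          have pu : (-(t*(1+ε)) + (t - Real.log (2 - Real.exp t)) / 2) * (4*(1+ε))
              ≤ -ε^2 := by
            nlinarith [ht', mul_le_mul_of_nonneg_left hL'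
              (by positivity : (0:ℝ) ≤ 2*(1+ε))]
          nlinarith [mul_le_mul_of_nonneg_left pu hE0]
end

section
/- If T is a quasi-balanced finite full binary tree, then E_T ≤ 2·m_T, where m_T is the minimum length of a branch of T and E_T is the expected length of a random branch. -/
/-!
Every edge weight of a weight function is at most `1`, so the weight of a branch is at most
its length. In a quasi-balanced tree every branch has weight `E T / 2`; applied to a shortest
branch this gives `E T / 2 ≤ minBranch T`.
-/

namespace BTree

variable {X : Type}

theorem exists_mem_branches_length_eq_minBranch (t : BTree X) :
    ∃ b ∈ branches t, b.length = minBranch t := by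
  induction t with
  | leaf => exact ⟨[], by simp [branches, minBranch]⟩
  | node _ l r ihl ihr =>
    obtain ⟨bl, hbl, hbl_len⟩ := ihl
    obtain ⟨br, hbr, hbr_len⟩ := ihr
    rcases le_total (minBranch l) (minBranch r) with h | h
    · exact ⟨false :: bl, by simp [branches, hbl], by simp [minBranch, hbl_len, h, Nat.add_comm]⟩
    · exact ⟨true :: br, by simp [branches, hbr], by simp [minBranch, hbr_len, h, Nat.add_comm]⟩

theorem take_mem_nodePaths {t : BTree X} {b : List Bool} (hb : b ∈ branches t) {i : ℕ}
    (hi : i < b.length) : b.take i ∈ nodePaths t := by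
  induction t generalizing b i with
  | leaf =>
    obtain rfl : b = [] := by simpa [branches] using hb
    simp at hi
  | node _ l r ihl ihr =>
    simp only [branches, List.mem_append, List.mem_map] at hb
    rcases hb with ⟨b', hb', rfl⟩ | ⟨b', hb', rfl⟩
    · cases i with
      | zero => simp [nodePaths]
      | succ j => simp [nodePaths, ihl hb' (by simpa using hi)]
    · cases i with
      | zero => simp [nodePaths]
      | succ j => simp [nodePaths, ihr hb' (by simpa using hi)]

theorem IsWeightFn.le_one {t : BTree X} {w : List Bool → Bool → ℝ} (hw : IsWeightFn t w)
    {p : List Bool} (hp : p ∈ nodePaths t) (d : Bool) : w p d ≤ 1 := by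
  obtain ⟨h_false, h_true, h_sum⟩ := hw p hp
  cases d <;> linarith

theorem branchWeight_le_length {w : List Bool → Bool → ℝ} {b : List Bool}
    (hw : ∀ i < b.length, w (b.take i) (b.getD i false) ≤ 1) :
    branchWeight w b ≤ b.length := by
  unfold branchWeight
  calc ((List.range b.length).map fun i => w (b.take i) (b.getD i false)).sum
      ≤ ((List.range b.length).map fun i => w (b.take i) (b.getD i false)).length • (1 : ℝ) :=
        List.sum_le_card_nsmul _ 1 (by simpa using hw)
    _ = b.length := by simp

theorem IsWeightFn.branchWeight_le_length {t : BTree X} {w : List Bool → Bool → ℝ}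
    (hw : IsWeightFn t w) {b : List Bool} (hb : b ∈ branches t) :
    branchWeight w b ≤ b.length :=
  BTree.branchWeight_le_length fun _ hi => hw.le_one (take_mem_nodePaths hb hi) _

end BTree

/-- The expected branch length of a quasi-balanced tree is at most twice the
minimum branch length. -/
theorem quasiBalanced_E_le_two_mul_minBranch {X : Type} (T : BTree X)
    (hqb : BTree.QuasiBalanced T) :
    BTree.E T ≤ 2 * (BTree.minBranch T : ℝ) := by
  obtain ⟨w, hw, h_balanced⟩ := hqb
  obtain ⟨b, hb, hb_len⟩ := BTree.exists_mem_branches_length_eq_minBranch T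
  have h_le : BTree.E T / 2 ≤ BTree.minBranch T := by
    rw [← h_balanced b hb, ← hb_len]
    exact hw.branchWeight_le_length hb
  linarith
end

section
/- Let D ≥ 2k, k ≥ 1 be integers and 0 < ε ≤ 1/3 such that (1+ε)D is an integer. Then Σ_{j=0}^k C((1+ε)D, j) ≤ 2^{εD − ε²k/3} · Σ_{j=0}^k C(D, j). -/
/-!
The ratio `C(M, j) / C(D, j) = ∏_{i<j} (M - i) / (D - i)` is a product of factors `≥ 1`, so each
term of the left-hand sum is at most `C(D, j)` times the full product over `i < k`. The `i`-th
factor is `1 + x_i` with `x_i = εD / (D - i) ∈ [ε, 2/3]`, and `1 + x ≤ exp (x - x² / 4)` there.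
Summing exponents, `∑_{i<k} 1 / (D - i) ≤ log (D / (D - k)) ≤ log 2` because `k ≤ D / 2`, and
the quadratic terms give `kε² / 4 ≥ (kε² / 3) log 2` because `log 2 ≤ 3 / 4`.
-/

open Finset Real

theorem one_add_le_exp_sub_sq_div_four {x : ℝ} (h0 : 0 ≤ x) (h1 : x ≤ 1) :
    1 + x ≤ exp (x - x ^ 2 / 4) := by
  have hs : 3 / 4 * x ≤ x - x ^ 2 / 4 := by nlinarith
  calc 1 + x ≤ 1 + (x - x ^ 2 / 4) + (x - x ^ 2 / 4) ^ 2 / 2 := by nlinarith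
    _ ≤ exp (x - x ^ 2 / 4) := quadratic_le_exp_of_nonneg (by linarith)

theorem sum_range_inv_sub_le_log_sub {x : ℝ} {k : ℕ} (hk : (k : ℝ) < x) :
    ∑ i ∈ range k, 1 / (x - i) ≤ log x - log (x - k) := by
  induction k with
  | zero => simp
  | succ k ih =>
    push_cast at hk
    have hy : 1 < x - k := by linarith
    have hstep : 1 / (x - k) ≤ log (x - k) - log (x - (k + 1)) := by
      rw [← log_div (by positivity) (by linarith)]
      have := one_sub_inv_le_log_of_pos (x := (x - k) / (x - (k + 1)))
        (by apply div_pos <;> linarith)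
      convert this using 1
      field_simp
      ring
    rw [sum_range_succ]
    push_cast
    linarith [ih (by linarith)]

theorem sum_range_inv_sub_le_log_two {x : ℝ} {k : ℕ} (hk : 2 * (k : ℝ) ≤ x) :
    ∑ i ∈ range k, 1 / (x - i) ≤ log 2 := by
  rcases k.eq_zero_or_pos with rfl | hk0
  · simpa using log_nonneg one_le_two
  have hk0' : (0 : ℝ) < k := by exact_mod_cast hk0
  calc ∑ i ∈ range k, 1 / (x - i) ≤ log x - log (x - k) :=
        sum_range_inv_sub_le_log_sub (by linarith)
    _ = log (x / (x - k)) := (log_div (by linarith) (by linarith)).symm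
    _ ≤ log 2 :=
        log_le_log (by apply div_pos <;> linarith) (by rw [div_le_iff₀ (by linarith)]; linarith)

theorem Nat.cast_choose_le_prod_mul_cast_choose {M D k : ℕ} {c : ℕ → ℝ}
    (hc : ∀ i < k, 0 ≤ c i) (h : ∀ i < k, ((M - i : ℕ) : ℝ) ≤ c i * (D - i : ℕ)) :
    (M.choose k : ℝ) ≤ (∏ i ∈ range k, c i) * D.choose k := by
  induction k with
  | zero => simp
  | succ k ih =>
    have hMk : (M.choose (k + 1) : ℝ) * (k + 1) = M.choose k * (M - k : ℕ) := by
      exact_mod_cast M.choose_succ_right_eq k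
    have hDk : (D.choose (k + 1) : ℝ) * (k + 1) = D.choose k * (D - k : ℕ) := by
      exact_mod_cast D.choose_succ_right_eq k
    have ih' := ih (fun i hi => hc i (by omega)) (fun i hi => h i (by omega))
    have hP : 0 ≤ (∏ i ∈ range k, c i) * D.choose k :=
      mul_nonneg (prod_nonneg fun i hi => hc i (by simp at hi; omega)) (by positivity)
    refine le_of_mul_le_mul_right ?_ (by positivity : (0 : ℝ) < k + 1)
    calc (M.choose (k + 1) : ℝ) * (k + 1) = M.choose k * (M - k : ℕ) := hMk
      _ ≤ (∏ i ∈ range k, c i) * D.choose k * (c k * (D - k : ℕ)) :=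
        mul_le_mul ih' (h k (by omega)) (by positivity) hP
      _ = (∏ i ∈ range (k + 1), c i) * D.choose (k + 1) * (k + 1) := by
        rw [mul_assoc _ _ ((k : ℝ) + 1), hDk, prod_range_succ]; ring

theorem sum_range_cast_choose_le_prod_mul_sum {M D k : ℕ} {c : ℕ → ℝ}
    (hc : ∀ i < k, 1 ≤ c i) (h : ∀ i < k, ((M - i : ℕ) : ℝ) ≤ c i * (D - i : ℕ)) :
    ∑ j ∈ range (k + 1), (M.choose j : ℝ) ≤
      (∏ i ∈ range k, c i) * ∑ j ∈ range (k + 1), (D.choose j : ℝ) := by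
  rw [mul_sum]
  refine sum_le_sum fun j hj => ?_
  have hjk : j ≤ k := Nat.lt_succ_iff.1 (mem_range.1 hj)
  calc (M.choose j : ℝ) ≤ (∏ i ∈ range j, c i) * D.choose j :=
        Nat.cast_choose_le_prod_mul_cast_choose (fun i hi => zero_le_one.trans (hc i (by omega)))
          (fun i hi => h i (by omega))
    _ ≤ (∏ i ∈ range k, c i) * D.choose j := by
        gcongr
        · exact fun i hi => zero_le_one.trans (hc i (by simp at hi; omega))
        · exact fun i hi _ => hc i (by simpa using hi)

theorem add_le_exp_div_sub_sq_div_four_mul {a d ε : ℝ} (hd : 0 < d) (hε : 0 ≤ ε)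
    (hεa : ε * d ≤ a) (had : a ≤ d) :
    d + a ≤ exp (a / d - ε ^ 2 / 4) * d := by
  have hεx : ε ≤ a / d := (le_div_iff₀ hd).2 hεa
  calc d + a = (1 + a / d) * d := by field_simp
    _ ≤ exp (a / d - (a / d) ^ 2 / 4) * d := by
        gcongr
        exact one_add_le_exp_sub_sq_div_four (hε.trans hεx) ((div_le_one hd).2 had)
    _ ≤ exp (a / d - ε ^ 2 / 4) * d := by gcongr

theorem prod_exp_le_two_rpow {x ε : ℝ} {k : ℕ} (hε : 0 ≤ ε) (hk : 2 * (k : ℝ) ≤ x) :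
    ∏ i ∈ range k, exp (ε * x / (x - i) - ε ^ 2 / 4) ≤ 2 ^ (ε * x - ε ^ 2 * k / 3) := by
  have hx : 0 ≤ x := by linarith [k.cast_nonneg (α := ℝ)]
  calc ∏ i ∈ range k, exp (ε * x / (x - i) - ε ^ 2 / 4)
      = exp (ε * x * ∑ i ∈ range k, 1 / (x - i) - k * (ε ^ 2 / 4)) := by
        simp_rw [← exp_sum, sum_sub_distrib, mul_sum, mul_one_div, sum_const, card_range,
          nsmul_eq_mul]
    _ ≤ exp (ε * x * log 2 - k * (ε ^ 2 / 4)) := by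
        gcongr
        exact sum_range_inv_sub_le_log_two hk
    _ ≤ exp (log 2 * (ε * x - ε ^ 2 * k / 3)) := by
        gcongr
        nlinarith [log_two_lt_d9, mul_nonneg (sq_nonneg ε) k.cast_nonneg]
    _ = 2 ^ (ε * x - ε ^ 2 * k / 3) := (rpow_def_of_pos two_pos _).symm

theorem partial_binomial_sum_growth_small_k_general (D k M : ℕ) (ε : ℝ)
    (hkD : 2 * k ≤ D) (hε : 0 < ε) (hε' : ε ≤ 1 / 3)
    (hM : (M : ℝ) = (1 + ε) * (D : ℝ)) :
    (∑ j ∈ Finset.range (k + 1), (M.choose j : ℝ)) ≤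
      (2 : ℝ) ^ (ε * (D : ℝ) - ε ^ 2 * (k : ℝ) / 3) *
        ∑ j ∈ Finset.range (k + 1), (D.choose j : ℝ) := by
  have hkD' : 2 * (k : ℝ) ≤ D := by exact_mod_cast hkD
  have hDM : D ≤ M := by exact_mod_cast (show (D : ℝ) ≤ M by nlinarith)
  have hDi : ∀ i < k, (D : ℝ) / 2 < D - i := fun i hi => by
    have : (i : ℝ) + 1 ≤ k := by exact_mod_cast hi
    linarith
  refine (sum_range_cast_choose_le_prod_mul_sum (D := D)
    (c := fun i => exp (ε * D / (D - i) - ε ^ 2 / 4)) (fun i hi => ?_) (fun i hi => ?_)).trans ?_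
  · have hd : 0 < (D : ℝ) - i := by linarith [hDi i hi, D.cast_nonneg (α := ℝ)]
    refine one_le_exp (sub_nonneg.2 ?_)
    calc ε ^ 2 / 4 ≤ ε := by nlinarith
      _ ≤ ε * D / (D - i) := (le_div_iff₀ hd).2 (by nlinarith [i.cast_nonneg (α := ℝ)])
  · have hd : 0 < (D : ℝ) - i := by linarith [hDi i hi, D.cast_nonneg (α := ℝ)]
    rw [Nat.cast_sub (by omega : i ≤ D), Nat.cast_sub (by omega : i ≤ M),
      show (M : ℝ) - i = (D - i) + ε * D by rw [hM]; ring]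
    exact add_le_exp_div_sub_sq_div_four_mul hd hε.le
      (by nlinarith [i.cast_nonneg (α := ℝ)]) (by nlinarith [hDi i hi])
  · gcongr
    exact prod_exp_le_two_rpow hε.le hkD'

/-- Improved growth bound for partial binomial sums: for integers `D ≥ 2k`,
`k ≥ 1`, and `0 < ε ≤ 1/3` with `(1+ε)D` an integer `M`,
`∑_{j ≤ k} C(M, j) ≤ 2^{εD - ε²k/3} · ∑_{j ≤ k} C(D, j)`. -/
theorem partial_binomial_sum_growth_small_k (D k M : ℕ) (ε : ℝ)
    (hk : 1 ≤ k) (hkD : 2 * k ≤ D) (hε : 0 < ε) (hε' : ε ≤ 1 / 3)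
    (hM : (M : ℝ) = (1 + ε) * (D : ℝ)) :
    (∑ j ∈ Finset.range (k + 1), (M.choose j : ℝ)) ≤
      (2 : ℝ) ^ (ε * (D : ℝ) - ε ^ 2 * (k : ℝ) / 3) *
        ∑ j ∈ Finset.range (k + 1), (D.choose j : ℝ) :=
  partial_binomial_sum_growth_small_k_general D k M ε hkD hε hε' hM
end

section
/- Consider the follow-the-leader learner FTL for prediction with n experts in the realizable setting (some expert never errs): at each round FTL predicts the average of the predictions of all experts that have made no mistake so far. Then on any realizable sequence, the total loss Σ_i |p_i − y_i| of FTL is at most H_n − 1 = Σ_{j=2}^n 1/j. -/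
open Classical

/-- The set of experts that have made no mistake before round `i`. -/
noncomputable def stillRight (n : ℕ) (advice : ℕ → Fin n → Bool) (y : ℕ → Bool)
    (i : ℕ) : Finset (Fin n) :=
  Finset.univ.filter (fun j => ∀ i' < i, advice i' j = y i')

/-- The follow-the-leader prediction at round `i`: the fraction of so-far
perfect experts predicting `1`. -/
noncomputable def ftlPred (n : ℕ) (advice : ℕ → Fin n → Bool) (y : ℕ → Bool)
    (i : ℕ) : ℝ :=
  (((stillRight n advice y i).filter (fun j => advice i j = true)).card : ℝ) /
    ((stillRight n advice y i).card : ℝ)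

lemma stillRight_succ (n : ℕ) (advice : ℕ → Fin n → Bool) (y : ℕ → Bool) (i : ℕ) :
    stillRight n advice y (i+1)
      = (stillRight n advice y i).filter (fun j => advice i j = y i) := by
  ext j
  simp only [stillRight, Finset.mem_filter, Finset.mem_univ, true_and, Nat.lt_succ_iff_lt_or_eq]
  constructor
  · intro h
    exact ⟨fun i' hi' => h i' (Or.inl hi'), h i (Or.inr rfl)⟩
  · rintro ⟨h1, h2⟩ i' (hi' | rfl)
    · exact h1 i' hi'
    · exact h2

lemma loss_eq (n : ℕ) (advice : ℕ → Fin n → Bool) (y : ℕ → Bool) (i : ℕ)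
    (hc : 0 < (stillRight n advice y i).card) :
    |(if y i then (1:ℝ) else 0) - ftlPred n advice y i|
      = (((stillRight n advice y i).card : ℝ) - ((stillRight n advice y (i+1)).card : ℝ))
        / ((stillRight n advice y i).card : ℝ) := by
  set G := stillRight n advice y i with hG
  have hc' : (0:ℝ) < (G.card : ℝ) := by exact_mod_cast hc
  rw [stillRight_succ]
  cases hy : y i with
  | true =>
    rw [← hG]
    have hle : (G.filter (fun j => advice i j = true)).card ≤ G.card :=
      Finset.card_filter_le _ _
    have hle' : ((G.filter (fun j => advice i j = true)).card : ℝ) ≤ (G.card : ℝ) := by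
      exact_mod_cast hle
    simp only [hy, if_true]
    rw [ftlPred, ← hG, abs_of_nonneg]
    · field_simp
    · have : ((G.filter (fun j => advice i j = true)).card : ℝ) / G.card ≤ 1 := by
        rw [div_le_one hc']; exact hle'
      linarith
  | false =>
    rw [← hG]
    have hsum : (G.filter (fun j => advice i j = true)).card
        + (G.filter (fun j => advice i j = false)).card = G.card := by
      have h1 : (G.filter (fun j => advice i j = false))
          = G.filter (fun j => ¬ (advice i j = true)) := by
        apply Finset.filter_congr; intro j _; simp
      rw [h1]
      exact Finset.card_filter_add_card_filter_not _
    have hsum' : ((G.filter (fun j => advice i j = true)).card : ℝ)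
        + ((G.filter (fun j => advice i j = false)).card : ℝ) = (G.card : ℝ) := by
      exact_mod_cast hsum
    have hnn : (0:ℝ) ≤ ((G.filter (fun j => advice i j = true)).card : ℝ) / G.card := by
      positivity
    rw [ftlPred, ← hG]
    rw [show (if false = true then (1:ℝ) else 0) = 0 by simp, zero_sub, abs_neg,
      abs_of_nonneg hnn]
    field_simp
    linarith

lemma step_le (a b : ℕ) (hb : b ≤ a) :
    ((a:ℝ) - (b:ℝ)) / (a:ℝ) ≤ ∑ k ∈ Finset.Ioc b a, (1 / (k:ℝ)) := by
  rcases Nat.eq_zero_or_pos a with ha | ha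
  · subst ha
    interval_cases b
    simp
  have ha' : (0:ℝ) < (a:ℝ) := by exact_mod_cast ha
  have h : ∀ k ∈ Finset.Ioc b a, (1:ℝ)/(a:ℝ) ≤ 1/(k:ℝ) := by
    intro k hk
    rw [Finset.mem_Ioc] at hk
    have hk0 : (0:ℝ) < (k:ℝ) := by exact_mod_cast Nat.lt_of_le_of_lt (Nat.zero_le b) hk.1
    exact one_div_le_one_div_of_le hk0 (by exact_mod_cast hk.2)
  calc ((a:ℝ) - (b:ℝ)) / (a:ℝ) = (Finset.Ioc b a).card * (1/(a:ℝ)) := by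
        rw [Nat.card_Ioc]
        rw [Nat.cast_sub hb]
        ring
    _ = ∑ _k ∈ Finset.Ioc b a, (1/(a:ℝ)) := by rw [Finset.sum_const, nsmul_eq_mul]
    _ ≤ ∑ k ∈ Finset.Ioc b a, (1/(k:ℝ)) := Finset.sum_le_sum h

lemma chain (a : ℕ → ℕ) : ∀ T, (∀ i < T, a (i+1) ≤ a i) → a T ≤ a 0 := by
  intro T
  induction T with
  | zero => intro _; exact le_refl _
  | succ T ih =>
    intro h
    exact le_trans (h T (Nat.lt_succ_self T)) (ih fun i hi => h i (Nat.lt_succ_of_lt hi))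

lemma sum_ratio_le (a : ℕ → ℕ) : ∀ T, (∀ i < T, a (i+1) ≤ a i) →
    ∑ i ∈ Finset.range T, (((a i : ℝ) - (a (i+1) : ℝ)) / (a i : ℝ))
      ≤ ∑ k ∈ Finset.Ioc (a T) (a 0), (1/(k:ℝ)) := by
  intro T
  induction T with
  | zero => intro _; simp
  | succ T ih =>
    intro hmono
    rw [Finset.sum_range_succ]
    have h1 := ih (fun i hi => hmono i (Nat.lt_succ_of_lt hi))
    have h3 : a (T+1) ≤ a T := hmono T (Nat.lt_succ_self T)
    have h4 : a T ≤ a 0 := chain a T (fun i hi => hmono i (Nat.lt_succ_of_lt hi))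
    have h2 := step_le (a T) (a (T+1)) h3
    rw [← Finset.sum_Ioc_consecutive (fun k => 1/(k:ℝ)) h3 h4]
    linarith

/-- On any realizable sequence (some expert never errs), the total loss of the
follow-the-leader learner over `T` rounds is at most `H_n - 1 = ∑_{j=2}^n 1/j`. -/
theorem ftl_loss_le_harmonic (n T : ℕ) (advice : ℕ → Fin n → Bool) (y : ℕ → Bool)
    (hreal : ∃ j : Fin n, ∀ i < T, advice i j = y i) :
    ∑ i ∈ Finset.range T,
        |(if y i then (1 : ℝ) else 0) - ftlPred n advice y i|
      ≤ ∑ j ∈ Finset.Icc 2 n, (1 / (j : ℝ)) := by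
  obtain ⟨j₀, hj₀⟩ := hreal
  set a : ℕ → ℕ := fun i => (stillRight n advice y i).card with ha
  have hmem : ∀ i ≤ T, j₀ ∈ stillRight n advice y i := by
    intro i hi
    simp only [stillRight, Finset.mem_filter, Finset.mem_univ, true_and]
    intro i' hi'
    exact hj₀ i' (lt_of_lt_of_le hi' hi)
  have hpos : ∀ i ≤ T, 0 < a i := fun i hi => Finset.card_pos.mpr ⟨j₀, hmem i hi⟩
  have hmono : ∀ i < T, a (i+1) ≤ a i := by
    intro i _
    exact Finset.card_le_card (by rw [stillRight_succ]; exact Finset.filter_subset _ _)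
  have ha0 : a 0 = n := by
    simp [ha, stillRight]
  have hrw : ∑ i ∈ Finset.range T,
        |(if y i then (1 : ℝ) else 0) - ftlPred n advice y i|
      = ∑ i ∈ Finset.range T, (((a i : ℝ) - (a (i+1) : ℝ)) / (a i : ℝ)) := by
    apply Finset.sum_congr rfl
    intro i hi
    rw [Finset.mem_range] at hi
    exact loss_eq n advice y i (hpos i (le_of_lt hi))
  rw [hrw]
  calc ∑ i ∈ Finset.range T, (((a i : ℝ) - (a (i+1) : ℝ)) / (a i : ℝ))
      ≤ ∑ k ∈ Finset.Ioc (a T) (a 0), (1/(k:ℝ)) := sum_ratio_le a T hmono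
    _ ≤ ∑ k ∈ Finset.Icc 2 n, (1/(k:ℝ)) := by
        rw [ha0]
        have hsub : Finset.Ioc (a T) n ⊆ Finset.Icc 2 n := by
          rw [show (2:ℕ) = 1 + 1 from rfl, Finset.Icc_add_one_left_eq_Ioc]
          exact Finset.Ioc_subset_Ioc_left (hpos T (le_refl T))
        apply Finset.sum_le_sum_of_subset_of_nonneg hsub
        intro k _ _
        positivity
end

section
/- Let T be a finite full binary tree labeled by instances, k-shattered by a hypothesis class H of size n (every branch is k-realizable by H), and let m_T be the minimum branch length. Then 2^{m_T} ≤ n·Σ_{j=0}^k C(m_T, j); consequently m_T ≤ D(n,k) where D(n,k) = max{d : 2^d ≤ n·Σ_{j=0}^k C(d,j)}. -/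
/-- `S` is `k`-realizable by `H`: some hypothesis in `H` errs on at most `k`
of the examples of `S`. -/
def KRealizable {X : Type} (H : Finset (X → Bool)) (k : ℕ) (S : List (X × Bool)) : Prop :=
  ∃ h ∈ H, S.countP (fun e => h e.1 != e.2) ≤ k

/-- `T` is `k`-shattered by `H`: every branch of `T` is `k`-realizable. -/
def KShattered {X : Type} (H : Finset (X → Bool)) (k : ℕ) (T : BTree X) : Prop :=
  ∀ b ∈ BTree.branches T, KRealizable H k (BTree.examplesAlong T b)

/-- `D(n,k)`: the largest `d` with `2^d ≤ n · ∑_{j ≤ k} C(d,j)`. -/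
noncomputable def Dnk (n k : ℕ) : ℕ :=
  sSup {d : ℕ | 2 ^ d ≤ n * ∑ j ∈ Finset.range (k + 1), Nat.choose d j}

/-! Let `m = m_T`. Every path `s` of length `m` is a prefix of a branch, so some `h ∈ H` errs on
at most `k` of the examples along `s`. The pair (`h`, set of error positions) determines `s`: at a
node labeled `x` the path turns in direction `h x xor e`, where `e` is the error bit. Hence the
`2^m` paths inject into `H × {A ⊆ Fin m | #A ≤ k}`. The bound `m_T ≤ D(n,k)` holds because `2^d`
eventually outgrows `n (k+1) d^k`. -/

open Finset

namespace BTree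

variable {X : Type}

lemma branches_ne_nil : ∀ t : BTree X, t.branches ≠ []
  | leaf => by simp [branches]
  | node _ l _ => by simp [branches, branches_ne_nil l]

lemma exists_mem_branches_prefix :
    ∀ (t : BTree X) (s : List Bool), s.length ≤ t.minBranch → ∃ b ∈ t.branches, s <+: b
  | t, [], _ =>
    (List.exists_mem_of_ne_nil _ t.branches_ne_nil).imp fun _ hb => ⟨hb, List.nil_prefix⟩
  | leaf, _ :: _, hs => by simp [minBranch] at hs
  | node _ l r, d :: s, hs => by
    simp only [minBranch, List.length_cons] at hs
    obtain ⟨b, hb, hsb⟩ :=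
      exists_mem_branches_prefix (if d then r else l) s (by cases d <;> simp <;> omega)
    refine ⟨d :: b, ?_, List.cons_prefix_cons.mpr ⟨rfl, hsb⟩⟩
    cases d <;> simpa [branches] using hb

lemma examplesAlong_prefix :
    ∀ (t : BTree X) {s b : List Bool}, s <+: b → t.examplesAlong s <+: t.examplesAlong b
  | leaf, _, _, _ => by simp [examplesAlong]
  | node .., [], _, _ => by simp [examplesAlong]
  | node .., _ :: _, [], h => by simp at h
  | node _ l r, d :: s, e :: b, h => by
    obtain ⟨rfl, hsb⟩ := List.cons_prefix_cons.mp h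
    exact List.cons_prefix_cons.mpr ⟨rfl, examplesAlong_prefix _ hsb⟩

lemma length_examplesAlong :
    ∀ (t : BTree X) (s : List Bool), s.length ≤ t.minBranch → (t.examplesAlong s).length = s.length
  | _, [], _ => by cases ‹BTree X› <;> simp [examplesAlong]
  | leaf, _ :: _, hs => by simp [minBranch] at hs
  | node _ l r, d :: s, hs => by
    simp only [minBranch, List.length_cons] at hs
    simp only [examplesAlong, List.length_cons]
    rw [length_examplesAlong _ s (by cases d <;> simp <;> omega)]

def mistakes (t : BTree X) (h : X → Bool) (s : List Bool) : List Bool :=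
  (t.examplesAlong s).map fun e => h e.1 != e.2

def pathOfMistakes : BTree X → (X → Bool) → List Bool → List Bool
  | node x l r, h, e :: es => (h x != e) :: pathOfMistakes (if h x != e then r else l) h es
  | _, _, _ => []

lemma pathOfMistakes_mistakes (h : X → Bool) :
    ∀ (t : BTree X) (s : List Bool), s.length ≤ t.minBranch →
      t.pathOfMistakes h (t.mistakes h s) = s
  | _, [], _ => by cases ‹BTree X› <;> simp [mistakes, examplesAlong, pathOfMistakes]
  | leaf, _ :: _, hs => by simp [minBranch] at hs
  | node x l r, d :: s, hs => by
    simp only [minBranch, List.length_cons] at hs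
    have := pathOfMistakes_mistakes h (if d then r else l) s (by cases d <;> simp <;> omega)
    simpa [mistakes, examplesAlong, pathOfMistakes] using this

end BTree

lemma KRealizable.of_sublist {X : Type} {H : Finset (X → Bool)} {k : ℕ} {S S' : List (X × Bool)}
    (hS : S.Sublist S') (h : KRealizable H k S') : KRealizable H k S :=
  let ⟨f, hf, hk⟩ := h
  ⟨f, hf, hS.countP_le.trans hk⟩

lemma KShattered.kRealizable_examplesAlong {X : Type} {H : Finset (X → Bool)} {k : ℕ}
    {T : BTree X} (hT : KShattered H k T) {s : List Bool} (hs : s.length ≤ T.minBranch) :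
    KRealizable H k (T.examplesAlong s) :=
  let ⟨b, hb, hsb⟩ := T.exists_mem_branches_prefix s hs
  KRealizable.of_sublist (T.examplesAlong_prefix hsb).sublist (hT b hb)

lemma List.count_true_ofFn {m : ℕ} (f : Fin m → Bool) :
    (List.ofFn f).count true = #(univ.filter fun i => f i) := by
  induction m with
  | zero => simp
  | succ m ih =>
    rw [List.ofFn_succ, List.count_cons, ih, Fin.card_filter_univ_succ]
    cases f 0 <;> simp

lemma List.exists_ofFn_mem_eq {m : ℕ} (e : List Bool) (he : e.length = m) :
    ∃ B : Finset (Fin m), List.ofFn (fun i => decide (i ∈ B)) = e ∧ #B = e.count true := by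
  subst he
  refine ⟨univ.filter fun i => e[i], by simp, ?_⟩
  conv_rhs => rw [← List.ofFn_getElem (xs := e)]
  rw [List.count_true_ofFn]; rfl

lemma Finset.card_filter_card_le_univ {α : Type*} [Fintype α] (k : ℕ) :
    #(univ.filter fun A : Finset α => #A ≤ k) = ∑ j ∈ range (k + 1), (Fintype.card α).choose j := by
  rw [card_eq_sum_card_fiberwise (f := card) (t := range (k + 1))
    (fun A hA => by simpa [Nat.lt_succ_iff] using hA)]
  refine sum_congr rfl fun j hj => ?_
  rw [← card_univ, ← card_powersetCard]
  congr 1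
  ext A
  simp only [mem_range] at hj
  simp only [mem_filter, mem_univ, true_and, mem_powersetCard, subset_univ]
  omega

lemma KShattered.two_pow_le_card_mul_sum_choose {X : Type} {H : Finset (X → Bool)} {k : ℕ}
    {T : BTree X} (hT : KShattered H k T) {m : ℕ} (hm : m ≤ T.minBranch) :
    2 ^ m ≤ #H * ∑ j ∈ range (k + 1), m.choose j := by
  let enc : Finset (Fin m) → List Bool := fun A => List.ofFn fun i => decide (i ∈ A)
  have enc_injective : Function.Injective enc := fun A B hAB => by
    ext i; simpa using congrFun (List.ofFn_injective hAB) i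
  let E := univ.filter fun A : Finset (Fin m) => #A ≤ k
  have hcover : univ.image enc ⊆ (H ×ˢ E).image fun p => T.pathOfMistakes p.1 (enc p.2) := by
    intro s hs
    obtain ⟨A, -, rfl⟩ := mem_image.mp hs
    have hlen : (enc A).length ≤ T.minBranch := by simpa [enc] using hm
    obtain ⟨h, hH, hk⟩ := hT.kRealizable_examplesAlong hlen
    obtain ⟨B, hB, hBcard⟩ := (T.mistakes h (enc A)).exists_ofFn_mem_eq (m := m)
      (by simp [BTree.mistakes, T.length_examplesAlong _ hlen, enc])
    refine mem_image.mpr ⟨(h, B), mem_product.mpr ⟨hH, ?_⟩, ?_⟩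
    · simpa [E, hBcard, BTree.mistakes, List.count_eq_countP, List.countP_map, Function.comp_def]
        using hk
    · simp only [enc] at hB ⊢
      rw [hB, T.pathOfMistakes_mistakes h _ hlen]
  calc 2 ^ m = #(univ.image enc) := by
        rw [card_image_of_injective _ enc_injective, card_univ, Fintype.card_finset,
          Fintype.card_fin]
    _ ≤ #((H ×ˢ E).image fun p => T.pathOfMistakes p.1 (enc p.2)) := card_le_card hcover
    _ ≤ #(H ×ˢ E) := card_image_le
    _ = #H * ∑ j ∈ range (k + 1), m.choose j := by
        rw [card_product, card_filter_card_le_univ, Fintype.card_fin]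

lemma Nat.eventually_mul_pow_lt_two_pow (C k : ℕ) :
    ∀ᶠ d : ℕ in Filter.atTop, C * d ^ k < 2 ^ d := by
  have hC : (0 : ℝ) < 1 / (C + 1) := by positivity
  filter_upwards [(tendsto_pow_const_div_const_pow_of_one_lt k one_lt_two).eventually
    (gt_mem_nhds hC)] with d hd
  rw [div_lt_div_iff₀ (by positivity) (by positivity), one_mul] at hd
  have : (C : ℝ) * d ^ k < 2 ^ d := by nlinarith [pow_nonneg (Nat.cast_nonneg d : (0 : ℝ) ≤ d) k]
  exact_mod_cast this

lemma Nat.sum_range_choose_le_mul_pow {d : ℕ} (hd : 1 ≤ d) (k : ℕ) :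
    ∑ j ∈ range (k + 1), d.choose j ≤ (k + 1) * d ^ k :=
  calc ∑ j ∈ range (k + 1), d.choose j ≤ ∑ _j ∈ range (k + 1), d ^ k :=
        sum_le_sum fun j hj => (d.choose_le_pow j).trans
          (Nat.pow_le_pow_right hd (Nat.lt_succ_iff.mp (mem_range.mp hj)))
    _ = (k + 1) * d ^ k := by simp

lemma bddAbove_two_pow_le_mul_sum_choose (n k : ℕ) :
    BddAbove {d : ℕ | 2 ^ d ≤ n * ∑ j ∈ range (k + 1), d.choose j} := by
  obtain ⟨N, hN⟩ := Filter.eventually_atTop.mp (Nat.eventually_mul_pow_lt_two_pow (n * (k + 1)) k)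
  refine ⟨max N 1, fun d hd => le_of_not_gt fun hlt => ?_⟩
  have hd1 : 1 ≤ d := (le_max_right N 1).trans hlt.le
  have := hd.trans (Nat.mul_le_mul_left n (Nat.sum_range_choose_le_mul_pow hd1 k))
  rw [← mul_assoc] at this
  exact (hN d ((le_max_left N 1).trans hlt.le)).not_ge this

/-- If `T` is `k`-shattered by a class `H` of size `n`, then
`2^{m_T} ≤ n · ∑_{j ≤ k} C(m_T, j)`; consequently `m_T ≤ D(n,k)`. -/
theorem kShattered_minBranch_le {X : Type} (H : Finset (X → Bool)) (k : ℕ)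
    (T : BTree X) (hsh : KShattered H k T) :
    2 ^ BTree.minBranch T ≤
        H.card * ∑ j ∈ Finset.range (k + 1), Nat.choose (BTree.minBranch T) j ∧
      BTree.minBranch T ≤ Dnk H.card k := by
  have hpow := hsh.two_pow_le_card_mul_sum_choose le_rfl
  exact ⟨hpow, le_csSup (bddAbove_two_pow_le_mul_sum_choose _ _) hpow⟩
end
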